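/- Decreasing products of b-deformed Jucys–Murphy operators applied to the identity pair partition agree with products of odd Jucys–Murphy elements: Let k ≥ 1 and let k ≥ i_1 > i_2 > ⋯ > i_r ≥ 1 be integers. In the free ℤ[b]-module with basis 𝒫_k, 𝒥_{i_1} 𝒥_{i_2} ⋯ 𝒥_{i_r} (𝔢_k) = J_{2i_1−1} J_{2i_2−1} ⋯ J_{2i_r−1} · 𝔢_k, where the odd Jucys–Murphy elements act via the linear extension of the S_{2k}-action on pair partitions. In particular this vector does not involve b. -/

import Mathlib

open scoped Classical
open MeasureTheory



/-- A pair partition of `{1, …, 2k}`, encoded as an involution of `ℕ` that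
moves exactly the points `1, …, 2k`.  The pairs are the two-element sets `{a, f a}`. -/
structure PairPartition (k : ℕ) where
  f : ℕ → ℕ
  invol : ∀ a, f (f a) = a
  moves : ∀ a, f a ≠ a ↔ (1 ≤ a ∧ a ≤ 2 * k)

namespace PairPartition

/-- The function underlying the identity (trivial) pair partition
`(1 2 | 3 4 | ⋯ | 2k-1 2k)`. -/
def trivFun (k : ℕ) (a : ℕ) : ℕ :=
  if 1 ≤ a ∧ a ≤ 2 * k then (if a % 2 = 1 then a + 1 else a - 1) else a

/-- The identity pair partition `𝔢_k = (1 2 | 3 4 | ⋯ | 2k-1 2k)`. -/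
def triv (k : ℕ) : PairPartition k where
  f := trivFun k
  invol := by intro a; unfold trivFun; split_ifs <;> omega
  moves := by intro a; unfold trivFun; split_ifs <;> omega

theorem ext' {k : ℕ} {m m' : PairPartition k} (h : m.f = m'.f) : m = m' := by
  cases m; cases m'; simpa using h

/-- The action of the transposition `(i j) ∈ S_{2k}` on pair partitions of `{1, …, 2k}`
(defined to do nothing if `i` or `j` lies outside `{1, …, 2k}`). -/
def swapAct {k : ℕ} (i j : ℕ) (m : PairPartition k) : PairPartition k :=
  if h : 1 ≤ i ∧ i ≤ 2 * k ∧ 1 ≤ j ∧ j ≤ 2 * k then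
    { f := fun a => Equiv.swap i j (m.f (Equiv.swap i j a))
      invol := by intro a; simp [m.invol]
      moves := by
        obtain ⟨hi1, hi2, hj1, hj2⟩ := h
        intro a
        have key : ∀ x y : ℕ, Equiv.swap i j x ≠ y ↔ x ≠ Equiv.swap i j y := by
          intro x y
          constructor
          · intro hxy hc; apply hxy; rw [hc]; simp
          · intro hxy hc; apply hxy; rw [← hc]; simp
        rw [key, ← Equiv.swap_apply_self i j a, Equiv.swap_apply_self i j a]
        rw [m.moves (Equiv.swap i j a)]
        rcases eq_or_ne a i with rfl | hai
        · rw [Equiv.swap_apply_left]; omega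
        rcases eq_or_ne a j with rfl | haj
        · rw [Equiv.swap_apply_right]; omega
        · rw [Equiv.swap_apply_of_ne_of_ne hai haj] }
  else m

/-- Removing the pair `{2k-1, 2k}` from a pair partition: the operation `𝔪 ↦ 𝔪↓`
(defined to return the trivial pair partition if `{2k-1, 2k} ∉ 𝔪`). -/
def down {k : ℕ} (m : PairPartition k) : PairPartition (k - 1) :=
  if h : m.f (2 * k - 1) = 2 * k then
    { f := fun a => if a = 2 * k - 1 ∨ a = 2 * k then a else m.f a
      invol := by
        intro a
        by_cases ha : a = 2 * k - 1 ∨ a = 2 * k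
        · simp [ha]
        · have h2k : m.f (2 * k) = 2 * k - 1 := by
            conv_lhs => rw [← h]
            exact m.invol _
          have hne1 : m.f a ≠ 2 * k - 1 := by
            intro hfa
            have h1 : m.f (m.f a) = m.f (2 * k - 1) := by rw [hfa]
            rw [m.invol, h] at h1
            exact ha (Or.inr h1)
          have hne2 : m.f a ≠ 2 * k := by
            intro hfa
            have h1 : m.f (m.f a) = m.f (2 * k) := by rw [hfa]
            rw [m.invol, h2k] at h1
            exact ha (Or.inl h1)
          simp only [if_neg ha, if_neg (not_or.mpr ⟨hne1, hne2⟩), m.invol]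
      moves := by
        intro a
        by_cases ha : a = 2 * k - 1 ∨ a = 2 * k
        · simp only [if_pos ha]
          rcases ha with ha | ha <;> subst ha <;> constructor <;> intro h' <;> first
            | exact absurd rfl h'
            | omega
        · push_neg at ha
          obtain ⟨ha1, ha2⟩ := ha
          simp only [if_neg (not_or.mpr ⟨ha1, ha2⟩)]
          rw [m.moves a]
          omega }
  else triv (k - 1)

/-- A pair partition as a permutation (involution) of `ℕ`. -/
def perm {k : ℕ} (m : PairPartition k) : Equiv.Perm ℕ :=
  Function.Involutive.toPerm m.f m.invol

end PairPartition

namespace PairPartition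

/-- The connected component (cycle) of the multigraph `Γ(𝔪)` containing a vertex `v`:
the orbit of `v` under the group generated by the involutions `𝔢_k` and `𝔪`. -/
def gammaOrbit {k : ℕ} (m : PairPartition k) (v : ℕ) : Set ℕ :=
  MulAction.orbit (Subgroup.closure {(triv k).perm, m.perm} : Subgroup (Equiv.Perm ℕ)) v

/-- The charge function of `Γ(𝔪)`: `charge m v` holds iff `v` receives charge `+`,
i.e. iff `v` is at even distance (in `Γ(𝔪)`) from the largest label of its cycle.
The vertices at even distance from the largest label `M` of a cycle are exactly the
orbit of `M` under the cyclic group generated by `𝔪 ∘ 𝔢_k`. -/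
def charge {k : ℕ} (m : PairPartition k) (v : ℕ) : Prop :=
  v ∈ MulAction.orbit (Subgroup.zpowers (m.perm * (triv k).perm) : Subgroup (Equiv.Perm ℕ))
        (sSup (gammaOrbit m v))

/-- The weight `ω^(b)(𝔪, (i j)·𝔪)` attached to the transposition `(i j)` acting on `𝔪`:
it is `1` if the charges of `i` and `j` in `Γ(𝔪)` agree, and `b` otherwise. -/
noncomputable def omegab {R : Type*} [CommRing R] (b : R) {k : ℕ}
    (m : PairPartition k) (i j : ℕ) : R :=
  if (charge m i ↔ charge m j) then 1 else b

/-- The number of cycles of `Γ(𝔪)` of length `2ℓ`, i.e. the multiplicity of `ℓ`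
in the coset-type `λ(𝔪)` of `𝔪`. -/
noncomputable def cycleCount {k : ℕ} (m : PairPartition k) (ℓ : ℕ) : ℕ :=
  (((Finset.Icc 1 (2 * k)).filter fun a => (gammaOrbit m a).ncard = 2 * ℓ).card) / (2 * ℓ)

/-- Two pair partitions have the same coset-type iff `Γ(𝔪)` and `Γ(𝔪')` have the same
number of cycles of every length. -/
def SameCosetType {k : ℕ} (m m' : PairPartition k) : Prop :=
  ∀ ℓ : ℕ, cycleCount m ℓ = cycleCount m' ℓ

/-- The pair partition `𝔪` has coset-type the multiset `μ` (a partition of `k`,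
presented as the multiset of its parts). -/
def HasCosetType {k : ℕ} (m : PairPartition k) (μ : Multiset ℕ) : Prop :=
  ∀ ℓ : ℕ, 1 ≤ ℓ → μ.count ℓ = cycleCount m ℓ

/-- All lists of length `n` with entries in the finset `S`. -/
def listsLen (S : Finset (ℕ × ℕ)) : ℕ → Finset (List (ℕ × ℕ))
  | 0 => {[]}
  | n + 1 => (S ×ˢ listsLen S n).image fun p => p.1 :: p.2

/-- Apply a sequence `τ = (τ_1, …, τ_r)` of transpositions (each encoded as a pair)
to a pair partition, the rightmost transposition acting first:
`τ_1 ∘ τ_2 ∘ ⋯ ∘ τ_r · 𝔪`. -/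
def applyFacts {k : ℕ} (l : List (ℕ × ℕ)) (m : PairPartition k) : PairPartition k :=
  l.foldr (fun t acc => swapAct t.1 t.2 acc) m

/-- `l` is a monotone factorisation of the pair partition `𝔪 ∈ 𝒫_k`: a sequence of
transpositions `(a_s b_s)` with `a_s < b_s`, all `b_s` odd, `b_1 ≤ b_2 ≤ ⋯ ≤ b_r`,
and `τ_1 ∘ ⋯ ∘ τ_r · 𝔪 = 𝔢_k`. -/
def IsMonoFact {k : ℕ} (m : PairPartition k) (l : List (ℕ × ℕ)) : Prop :=
  (∀ t ∈ l, 1 ≤ t.1 ∧ t.1 < t.2 ∧ t.2 ≤ 2 * k ∧ Odd t.2) ∧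
  List.Pairwise (· ≤ ·) (l.map Prod.snd) ∧
  applyFacts l m = triv k

/-- The hive number of a monotone factorisation: the number of distinct values among
`b_1, …, b_r`. -/
def hive (l : List (ℕ × ℕ)) : ℕ := (l.map Prod.snd).toFinset.card

/-- The flip number of a monotone factorisation `τ` of `𝔪`: the number of indices `s`
with `ω^(b)(𝔪^(s), τ_s · 𝔪^(s)) = b`, where `𝔪^(s) = τ_{s+1} ∘ ⋯ ∘ τ_r · 𝔪`. -/
noncomputable def flip {k : ℕ} (m : PairPartition k) : List (ℕ × ℕ) → ℕ
  | [] => 0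
  | t :: rest =>
      (if (charge (applyFacts rest m) t.1 ↔ charge (applyFacts rest m) t.2) then 0 else 1)
        + flip m rest

/-- The finset of monotone factorisations of `𝔪 ∈ 𝒫_k` of length `r`. -/
noncomputable def monoFinset {k : ℕ} (m : PairPartition k) (r : ℕ) : Finset (List (ℕ × ℕ)) :=
  (listsLen ((Finset.Icc 1 (2 * k)) ×ˢ (Finset.Icc 1 (2 * k))) r).filter fun l => IsMonoFact m l

/-- A sequence of transpositions is connected (relative to level `k`) if together with the
involution `ι = (1 2)(3 4)⋯(2k-1 2k)` it generates a subgroup acting transitively on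
`{1, …, 2k}`. -/
def IsConnectedFact (k : ℕ) (l : List (ℕ × ℕ)) : Prop :=
  ∀ a ∈ Finset.Icc 1 (2 * k), ∀ b ∈ Finset.Icc 1 (2 * k),
    ∃ σ ∈ Subgroup.closure
        ({(triv k).perm} ∪ {p : Equiv.Perm ℕ | ∃ t ∈ l, p = Equiv.swap t.1 t.2}),
      σ a = b

end PairPartition


noncomputable instance matrixMeasurableSpace {N : ℕ} :
    MeasurableSpace (Matrix (Fin N) (Fin N) ℝ) :=
  inferInstanceAs (MeasurableSpace (Fin N → Fin N → ℝ))

/-- The compact group `O(N)` of real orthogonal `N × N` matrices. -/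
abbrev OrthGroup (N : ℕ) := Matrix.orthogonalGroup (Fin N) ℝ

noncomputable instance orthMeasurableSpace {N : ℕ} : MeasurableSpace (OrthGroup N) :=
  borel _

/-- The diagonal matrix `I_{M,N}` whose first `M` diagonal entries are `1` and whose
remaining entries are `0`. -/
def IMN (N M : ℕ) : Matrix (Fin N) (Fin N) ℝ :=
  Matrix.diagonal fun p => if (p : ℕ) < M then (1 : ℝ) else 0

/-- The map `O ↦ O · I_{M,N} · Oᵀ` from `O(N)` onto the space `A(M,N)` of idempotent
real symmetric `N × N` matrices of rank `M`. -/
def grassMap (N M : ℕ) (O : OrthGroup N) : Matrix (Fin N) (Fin N) ℝ :=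
  (O : Matrix (Fin N) (Fin N) ℝ) * IMN N M * Matrix.transpose (O : Matrix (Fin N) (Fin N) ℝ)


/-- The product `A_{i(1)i(2)} A_{i(3)i(4)} ⋯ A_{i(2k-1)i(2k)}` of matrix entries. -/
def prodEntries {N : ℕ} (k : ℕ) (i : ℕ → Fin N) (A : Matrix (Fin N) (Fin N) ℝ) : ℝ :=
  ∏ a ∈ Finset.range k, A (i (2 * a + 1)) (i (2 * a + 2))



open PairPartition


/-- A step in the (`b`- or `bt`-) Weingarten graph: a type-A edge `𝔪 → (i 2k-1)·𝔪`,
a type-B edge `𝔪 → 𝔪↓`, or a type-C edge `𝔪 → ((i 2k-1)·𝔪)↓`. -/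
inductive WStep where
  | A (i : ℕ) : WStep
  | B : WStep
  | C (i : ℕ) : WStep
deriving DecidableEq

/-- `IsPathTo k 𝔪 ρ` holds iff `ρ` is a path in the `bt`-Weingarten graph from the
pair partition `𝔪 ∈ 𝒫_k` to the empty pair partition. -/
def IsPathTo : (k : ℕ) → PairPartition k → List WStep → Prop
  | 0, _, [] => True
  | _ + 1, _, [] => False
  | 0, _, _ :: _ => False
  | k + 1, m, WStep.A i :: ρ =>
      1 ≤ i ∧ i ≤ 2 * (k + 1) - 2 ∧ IsPathTo (k + 1) (swapAct i (2 * (k + 1) - 1) m) ρ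
  | k + 1, m, WStep.B :: ρ =>
      m.f (2 * (k + 1) - 1) = 2 * (k + 1) ∧ IsPathTo k (down m) ρ
  | k + 1, m, WStep.C i :: ρ =>
      1 ≤ i ∧ i ≤ 2 * (k + 1) - 2 ∧ m.f i = 2 * (k + 1) ∧
        IsPathTo k (down (swapAct i (2 * (k + 1) - 1) m)) ρ

/-- The product of the `b`-dependent edge weights along a path. -/
noncomputable def pathWeight {R : Type*} [CommRing R] (b : R) :
    (k : ℕ) → PairPartition k → List WStep → R
  | _, _, [] => 1
  | 0, _, _ :: _ => 1
  | k + 1, m, WStep.A i :: ρ =>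
      omegab b m i (2 * (k + 1) - 1) * pathWeight b (k + 1) (swapAct i (2 * (k + 1) - 1) m) ρ
  | k + 1, m, WStep.B :: ρ => pathWeight b k (down m) ρ
  | k + 1, m, WStep.C i :: ρ => pathWeight b k (down (swapAct i (2 * (k + 1) - 1) m)) ρ

/-- The number of type-A edges of a path. -/
def countA (l : List WStep) : ℕ :=
  (l.filter fun s => match s with | WStep.A _ => true | _ => false).length

/-- The number of type-B edges of a path. -/
def countB (l : List WStep) : ℕ :=
  (l.filter fun s => match s with | WStep.B => true | _ => false).length

/-- The number of type-C edges of a path. -/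
def countC (l : List WStep) : ℕ :=
  (l.filter fun s => match s with | WStep.C _ => true | _ => false).length

/-- The `b`-Weingarten function `Wg^(b)(𝔪) ∈ ℤ[b]⟦X⟧`: the coefficient of `X^n` is the
sum of `(-1)^{ℓ_A(ρ)} w(ρ)` over all paths `ρ` (with no type-C edges, i.e. paths in the
`b`-Weingarten graph) from `𝔪` to the empty pair partition with `ℓ_A(ρ) + ℓ_B(ρ) = n`.
Here `b` is the polynomial variable of `ℤ[b]`. -/
noncomputable def WgB (k : ℕ) (m : PairPartition k) : PowerSeries (Polynomial ℤ) :=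
  PowerSeries.mk fun n =>
    ∑ᶠ (ρ : List WStep)
      (_ : IsPathTo k m ρ ∧ (∀ i, WStep.C i ∉ ρ) ∧ countA ρ + countB ρ = n),
      (-1 : Polynomial ℤ) ^ countA ρ * pathWeight (Polynomial.X : Polynomial ℤ) k m ρ

/-- The `bt`-Weingarten function `Wg^(bt)(𝔪) ∈ (ℤ[b,y])⟦X⟧`: the coefficient of `X^n` is
the sum of `(-1)^{ℓ_A(ρ)} y^{ℓ_B(ρ)} w(ρ)` over all paths `ρ` in the `bt`-Weingarten graph
from `𝔪` to the empty pair partition with `ℓ_A(ρ) + ℓ_C(ρ) = n`.  Here `b = X 0` and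
`y = X 1` in `ℤ[b,y] = MvPolynomial (Fin 2) ℤ`. -/
noncomputable def WgBT (k : ℕ) (m : PairPartition k) :
    PowerSeries (MvPolynomial (Fin 2) ℤ) :=
  PowerSeries.mk fun n =>
    ∑ᶠ (ρ : List WStep) (_ : IsPathTo k m ρ ∧ countA ρ + countC ρ = n),
      (-1 : MvPolynomial (Fin 2) ℤ) ^ countA ρ * (MvPolynomial.X 1) ^ countB ρ *
        pathWeight (MvPolynomial.X 0 : MvPolynomial (Fin 2) ℤ) k m ρ

/-- The standard basis vector `𝔪` of the free module with basis `𝒫_k`,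
realised as functions `𝒫_k → R`. -/
noncomputable def basisVec {R : Type*} [CommRing R] (k : ℕ) (m : PairPartition k) :
    PairPartition k → R :=
  fun n => if n = m then 1 else 0

/-- The `b`-deformed Jucys–Murphy operator `𝒥_i` acting on the free module with basis
`𝒫_k` (realised as functions `𝒫_k → R`): on basis vectors,
`𝒥_i(𝔪) = ∑_{a=1}^{2i-2} ω^(b)((a 2i-1)·𝔪, 𝔪) · (a 2i-1)·𝔪`. -/
noncomputable def JbOp {R : Type*} [CommRing R] (b : R) {k : ℕ} (i : ℕ)
    (v : PairPartition k → R) : PairPartition k → R :=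
  fun n => ∑ a ∈ Finset.Icc 1 (2 * i - 2),
    omegab b n a (2 * i - 1) * v (swapAct a (2 * i - 1) n)

/-- The (odd) Jucys–Murphy element `J_{2i-1} = ∑_{a=1}^{2i-2} (a
 2i-1)` of the group
algebra of `S_{2k}`, acting on the free module with basis `𝒫_k` via the linear extension
of the `S_{2k}`-action on pair partitions. -/
noncomputable def JoddOp {R : Type*} [CommRing R] {k : ℕ} (i : ℕ)
    (v : PairPartition k → R) : PairPartition k → R :=
  fun n => ∑ a ∈ Finset.Icc 1 (2 * i - 2), v (swapAct a (2 * i - 1) n)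

/-- The vector `𝔭_μ = ∑_{𝔪 : λ(𝔪) = μ} 𝔪`, i.e. the indicator function of the set of
pair partitions of coset-type `μ`. -/
noncomputable def pVec {R : Type*} [CommRing R] (k : ℕ) (μ : Multiset ℕ) :
    PairPartition k → R :=
  fun m => if HasCosetType m μ then 1 else 0

noncomputable def applyPows {R : Type*} [CommRing R] (b : R) {k : ℕ} :
    List (ℕ × ℕ) → (PairPartition k → R) → (PairPartition k → R)
  | [], v => v
  | ia :: rest, v => (JbOp b ia.1)^[ia.2] (applyPows b rest v)


/-- The coefficient ring `ℤ[b,y]⟦X⟧`, with `b = X 0` and `y = X 1`. -/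
abbrev SeriesRing := PowerSeries (MvPolynomial (Fin 2) ℤ)

noncomputable def bS : SeriesRing := PowerSeries.C (MvPolynomial.X 0)
noncomputable def yS : SeriesRing := PowerSeries.C (MvPolynomial.X 1)

/-- The operator-valued power series `(1 + X·𝒥_i)⁻¹ = ∑_{j ≥ 0} (-X)^j 𝒥_i^j`
applied to a vector `v`, computed coefficientwise. -/
noncomputable def invApply (k : ℕ) (i : ℕ) (v : PairPartition k → SeriesRing) :
    PairPartition k → SeriesRing :=
  fun n => PowerSeries.mk fun d =>
    ∑ᶠ j : ℕ, PowerSeries.coeff d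
      ((-(PowerSeries.X : SeriesRing)) ^ j * ((JbOp bS i)^[j] v) n)

/-- The vector `(y + X𝒥_j)(1 + X𝒥_j)⁻¹ ⋯ (y + X𝒥_1)(1 + X𝒥_1)⁻¹ (𝔢_k)`. -/
noncomputable def prodVec (k : ℕ) : ℕ → (PairPartition k → SeriesRing)
  | 0 => fun n => if n = triv k then 1 else 0
  | j + 1 => fun n =>
      yS * invApply k (j + 1) (prodVec k j) n +
        PowerSeries.X * (JbOp bS (j + 1) (invApply k (j + 1) (prodVec k j))) n


open MvPolynomial

/-- The formal partial derivative `∂_n = ∂/∂p_n` on the polynomial ring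
`K[p_1, p_2, …]` (the variables being indexed by positive naturals);
junk value `0` for `n = 0`. -/
noncomputable def pd (K : Type*) [CommRing K] (n : ℕ) :
    MvPolynomial ℕ+ K →ₗ[K] MvPolynomial ℕ+ K :=
  if h : 0 < n then (pderiv (⟨n, h⟩ : ℕ+)).toLinearMap else 0

/-- The variable `p_n` of `K[p_1, p_2, …]`; junk value `0` for `n = 0`. -/
noncomputable def pvar (K : Type*) [CommRing K] (n : ℕ) : MvPolynomial ℕ+ K :=
  if h : 0 < n then X ⟨n, h⟩ else 0

section SumOp

variable (K : Type*) [CommRing K]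

lemma sumOp_support_subset (m : ℕ) (f : MvPolynomial ℕ+ K) :
    (Function.support fun i => ((i + m : ℕ) : K) • (pvar K i * pd K (i + m) f)) ⊆
      ((fun i => i + m) ⁻¹' ↑(f.vars.image (fun v : ℕ+ => (v : ℕ)))) := by
  intro i hi
  simp only [Function.mem_support] at hi
  by_contra hmem
  apply hi
  rcases Nat.eq_zero_or_pos (i + m) with h0 | h0
  · have hi0 : i = 0 := by omega
    subst hi0
    simp [pvar]
  · have hnot : (⟨i + m, h0⟩ : ℕ+) ∉ f.vars := by
      intro hv
      apply hmem
      simp only [Set.mem_preimage, Finset.coe_image, Set.mem_image, Finset.mem_coe]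
      exact ⟨⟨i + m, h0⟩, hv, rfl⟩
    have hz : pd K (i + m) f = 0 := by
      have e : pd K (i + m) = (pderiv (⟨i + m, h0⟩ : ℕ+)).toLinearMap := dif_pos h0
      rw [e]
      have := pderiv_eq_zero_of_notMem_vars (R := K) hnot
      first
        | exact this
        | simpa using this
    rw [hz, mul_zero, smul_zero]

lemma sumOp_support_finite (m : ℕ) (f : MvPolynomial ℕ+ K) :
    (Function.support fun i => ((i + m : ℕ) : K) • (pvar K i * pd K (i + m) f)).Finite := by
  apply Set.Finite.subset _ (sumOp_support_subset K m f)
  apply Set.Finite.preimage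
  · exact (add_left_injective m).injOn
  · exact (f.vars.image (fun v : ℕ+ => (v : ℕ))).finite_toSet

/-- The operator `∑_{i ≥ 1} (i+m) p_i ∂_{i+m}` on `K[p_1, p_2, …]`
(a well-defined linear operator, the sum being locally finite on polynomials). -/
noncomputable def sumOp (m : ℕ) : MvPolynomial ℕ+ K →ₗ[K] MvPolynomial ℕ+ K where
  toFun f := ∑ᶠ i : ℕ, ((i + m : ℕ) : K) • (pvar K i * pd K (i + m) f)
  map_add' x y := by
    have key : ∀ i : ℕ, ((i + m : ℕ) : K) • (pvar K i * pd K (i + m) (x + y)) =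
        ((i + m : ℕ) : K) • (pvar K i * pd K (i + m) x) +
          ((i + m : ℕ) : K) • (pvar K i * pd K (i + m) y) := by
      intro i
      rw [map_add, mul_add, smul_add]
    rw [finsum_congr key]
    exact finsum_add_distrib (sumOp_support_finite K m x) (sumOp_support_finite K m y)
  map_smul' c x := by
    have key : ∀ i : ℕ, ((i + m : ℕ) : K) • (pvar K i * pd K (i + m) (c • x)) =
        c • (((i + m : ℕ) : K) • (pvar K i * pd K (i + m) x)) := by
      intro i
      rw [_root_.map_smul, smul_comm]
      congr 1
      rw [mul_smul_comm]
    rw [finsum_congr key]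
    simp only [RingHom.id_apply]
    exact (smul_finsum' c (sumOp_support_finite K m x)).symm
end SumOp

/-- The `bt`-deformed Virasoro-type operator `L_m` of Theorem 3.5/4.7, acting on the
polynomial ring `K[p_1, p_2, …]`. -/
noncomputable def Lop (K : Type*) [CommRing K] (b t z hbar : K) (m : ℕ) :
    MvPolynomial ℕ+ K →ₗ[K] MvPolynomial ℕ+ K :=
  (((m : K) * Ring.inverse hbar) • pd K m)
    - (1 + b) • (∑ i ∈ Finset.Ioo 0 m,
        (((i : ℕ) : K) * (((m - i : ℕ)) : K)) • (pd K i ∘ₗ pd K (m - i)))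
    - sumOp K m
    - ((b * (m : K) * ((m - 1 : ℕ) : K)) • pd K m)
    - ((z * Ring.inverse hbar * (t - 1) * ((m - 1 : ℕ) : K)) • pd K (m - 1))
    - (if m = 1 then (z * Ring.inverse hbar * Ring.inverse hbar * Ring.inverse (1 + b)) •
        (LinearMap.id : MvPolynomial ℕ+ K →ₗ[K] MvPolynomial ℕ+ K) else 0)
open PairPartition

/-- `i : {1,…,2k} → {1,…,N}` is admissible for `𝔪`: `{a,b} ∈ 𝔪` implies `i a = i b`. -/
def Admissible {N : ℕ} (k : ℕ) (m : PairPartition k) (i : ℕ → Fin N) : Prop :=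
  ∀ a, 1 ≤ a → a ≤ 2 * k → i (m.f a) = i a

/-- `i : {1,…,2k} → {1,…,N}` is strongly admissible for `𝔪`:
for `a, b ∈ {1,…,2k}`, `i a = i b` holds iff `a = b` or `{a,b} ∈ 𝔪`. -/
def StronglyAdmissible {N : ℕ} (k : ℕ) (m : PairPartition k) (i : ℕ → Fin N) : Prop :=
  ∀ a b, 1 ≤ a → a ≤ 2 * k → 1 ≤ b → b ≤ 2 * k → (i a = i b ↔ (a = b ∨ m.f a = b))

/-- `ĥ^{(t)}_r(𝔪)` evaluated at a real number `t`: the weighted count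
`∑_{τ ∈ Mono(𝔪), ℓ(τ) = r} t^{hive(τ)}`. -/
noncomputable def hiveSum {k : ℕ} (m : PairPartition k) (r : ℕ) (t : ℝ) : ℝ :=
  ∑ l ∈ monoFinset m r, t ^ hive l

/-- The `bt`-monotone count `∑_{τ ∈ Mono(𝔪), ℓ(τ) = r} b^{flip(τ)} t^{hive(τ)}`
in `ℤ[b,t]`, with `b = X 0` and `t = X 1`. -/
noncomputable def btSum {k : ℕ} (m : PairPartition k) (r : ℕ) : MvPolynomial (Fin 2) ℤ :=
  ∑ l ∈ monoFinset m r,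
    (MvPolynomial.X 0 : MvPolynomial (Fin 2) ℤ) ^ (flip m l) *
      (MvPolynomial.X 1) ^ (hive l)

/-- The connected `bt`-monotone count
`∑_{τ ∈ CMono(𝔪), ℓ(τ) = r} b^{flip(τ)} t^{hive(τ)}` in `ℚ[b,t]`,
with `b = X 0` and `t = X 1`. -/
noncomputable def cMonoSum {k : ℕ} (m : PairPartition k) (r : ℕ) : MvPolynomial (Fin 2) ℚ :=
  ∑ l ∈ (monoFinset m r).filter (fun l => IsConnectedFact k l),
    (MvPolynomial.X 0 : MvPolynomial (Fin 2) ℚ) ^ (flip m l) *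
      (MvPolynomial.X 1) ^ (hive l)

/-- The operator `c + J_{2i-1}` on the free module with basis `𝒫_k`. -/
noncomputable def affJoddOp {k : ℕ} (c : ℝ) (i : ℕ) (v : PairPartition k → ℝ) :
    PairPartition k → ℝ :=
  fun n => c * v n + JoddOp i v n

/-!
Apply the operators from the right. Every pair partition in the support of
`J_{2i_s-1} ⋯ J_{2i_r-1} · 𝔢_k` agrees with `𝔢_k` on `{2i_s+1, …, 2k}`. For such `𝔪`, `i > i_s`
and `a ≤ 2i-2`, the cycle of `Γ((a 2i-1)·𝔪)` through `2i` stays inside `{1, …, 2i}`, so `2i` is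
its largest label and has charge `+`. Its two neighbours `a` and `2i-1` then both have charge `−`,
so every weight `ω^(b)` occurring in `𝒥_i` equals `1` and `𝒥_i` acts as `J_{2i-1}`.
-/

theorem List.rel_headD_of_pairwise_cons {α : Type*} {r : α → α → Prop} {a d : α} {l : List α}
    (hl : (a :: l).Pairwise r) (had : r a d) : r a (l.headD d) := by
  cases l with
  | nil => exact had
  | cons b _ => exact List.rel_of_pairwise_cons hl List.mem_cons_self

theorem Equiv.swap_mapsTo {α : Type*} [DecidableEq α] {s : Set α} {a b : α} (ha : a ∈ s)
    (hb : b ∈ s) : Set.MapsTo (Equiv.swap a b) s s := by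
  intro x hx
  rw [Equiv.swap_apply_def]
  split_ifs <;> assumption

section Parity

open MulAction Subgroup

variable {G α : Type*} [Group G] [MulAction G α]

theorem smul_zpow_smul_eq_of_conj_eq_inv {u g : G} (hconj : u * g * u⁻¹ = g⁻¹) {x : α} {q : ℤ}
    (hx : u • x = g ^ (2 * q) • x) : u • g ^ q • x = g ^ q • x := by
  calc u • g ^ q • x = (u * g ^ q * u⁻¹) • u • x := by simp only [smul_smul, inv_mul_cancel_right]
    _ = g ^ (-q) • g ^ (2 * q) • x := by rw [← conj_zpow, hconj, inv_zpow, zpow_neg, hx]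
    _ = g ^ q • x := by rw [smul_smul, ← zpow_add]; congr 2; ring

/-- In the graph with edges `y ~ u • y` and `y ~ w • y` every cycle alternates between the two
kinds of edges, so the `⟨u * w⟩`-orbit of `x` is at even distance from `x` and `u • x` at odd
distance. -/
theorem smul_notMem_orbit_zpowers_mul {u w : G} (hu : u * u = 1) (hw : w * w = 1) {x : α}
    (hfree : ∀ y ∈ orbit (zpowers (u * w)) x, u • y ≠ y ∧ w • y ≠ y) :
    u • x ∉ orbit (zpowers (u * w)) x := by
  set g := u * w with hg
  have hu' : u⁻¹ = u := inv_eq_of_mul_eq_one_right hu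
  have hw' : w⁻¹ = w := inv_eq_of_mul_eq_one_right hw
  have hconj_u : u * g * u⁻¹ = g⁻¹ := by rw [hg, mul_inv_rev, hu', hw', ← mul_assoc, hu, one_mul]
  have hconj_w : w * g * w⁻¹ = g⁻¹ := by
    rw [hg, mul_inv_rev, hu', hw', mul_assoc, mul_assoc, hw, mul_one]
  have hmem : ∀ q : ℤ, g ^ q • x ∈ orbit (zpowers g) x :=
    fun q => ⟨⟨g ^ q, zpow_mem_zpowers g q⟩, rfl⟩
  rintro ⟨⟨σ, hσ⟩, hσx⟩
  obtain ⟨n, rfl⟩ := mem_zpowers_iff.mp hσ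
  replace hσx : g ^ n • x = u • x := hσx
  obtain ⟨q, rfl | rfl⟩ := Int.even_or_odd' n
  · exact (hfree _ (hmem q)).1 (smul_zpow_smul_eq_of_conj_eq_inv hconj_u hσx.symm)
  · have hwx : w • x = g ^ (2 * q) • x := by
      rw [show w = g⁻¹ * u by rw [hg, mul_inv_rev, hu', hw', mul_assoc, hu, mul_one], mul_smul,
        ← hσx, smul_smul, ← zpow_neg_one, ← zpow_add,
        show (-1 : ℤ) + (2 * q + 1) = 2 * q by ring]
    exact (hfree _ (hmem q)).2 (smul_zpow_smul_eq_of_conj_eq_inv hconj_w hwx)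

theorem smul_notMem_orbit_zpowers_mul' {u w : G} (hu : u * u = 1) (hw : w * w = 1) {x : α}
    (hfree : ∀ y ∈ orbit (zpowers (u * w)) x, u • y ≠ y ∧ w • y ≠ y) :
    w • x ∉ orbit (zpowers (u * w)) x := by
  have hzp : zpowers (w * u) = zpowers (u * w) := by
    rw [← zpowers_inv, mul_inv_rev, inv_eq_of_mul_eq_one_right hu,
      inv_eq_of_mul_eq_one_right hw]
  rw [← hzp] at hfree ⊢
  exact smul_notMem_orbit_zpowers_mul hw hu fun y hy => (hfree y hy).symm

end Parity

namespace PairPartition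

open Set MulAction Subgroup
open scoped Pointwise

variable {k : ℕ}

theorem perm_mul_self (m : PairPartition k) : m.perm * m.perm = 1 :=
  Equiv.ext m.invol

theorem mapsTo_f_Icc (m : PairPartition k) : MapsTo m.f (Icc 1 (2 * k)) (Icc 1 (2 * k)) := by
  intro y hy
  rw [mem_Icc, ← m.moves, m.invol]
  exact fun h => (m.moves y).mpr hy h.symm

theorem perm_mem_stabilizer {m : PairPartition k} {s : Set ℕ} (hm : MapsTo m.f s s) :
    m.perm ∈ stabilizer (Equiv.Perm ℕ) s := by
  refine mem_stabilizer_set.mpr fun y => ⟨fun hy => ?_, fun hy => hm hy⟩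
  rw [← m.invol y]
  exact hm hy

theorem gammaOrbit_subset {m : PairPartition k} {s : Set ℕ} (hm : MapsTo m.f s s)
    (htriv : MapsTo (trivFun k) s s) {v : ℕ} (hv : v ∈ s) : gammaOrbit m v ⊆ s := by
  have hle : closure {(triv k).perm, m.perm} ≤ stabilizer (Equiv.Perm ℕ) s :=
    (closure_le _).mpr (insert_subset (perm_mem_stabilizer (m := triv k) htriv)
      (singleton_subset_iff.mpr (perm_mem_stabilizer hm)))
  rintro _ ⟨σ, rfl⟩
  exact (mem_stabilizer_set.mp (hle σ.2) v).mpr hv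

theorem not_charge_of_sSup_gammaOrbit {m : PairPartition k} {M : ℕ} (hM : M ∈ Icc 1 (2 * k))
    (hsup : sSup (gammaOrbit m M) = M) :
    ¬ charge m (m.f M) ∧ ¬ charge m (trivFun k M) := by
  have hclosure : ∀ {σ}, σ ∈ ({(triv k).perm, m.perm} : Set (Equiv.Perm ℕ)) →
      σ ∈ closure {(triv k).perm, m.perm} := fun h => subset_closure h
  have hsame : ∀ v ∈ gammaOrbit m M, sSup (gammaOrbit m v) = M := fun v hv => by
    rw [gammaOrbit, orbit_eq_iff.mpr hv]
    exact hsup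
  have hfree : ∀ y ∈ orbit (zpowers (m.perm * (triv k).perm)) M,
      m.perm • y ≠ y ∧ (triv k).perm • y ≠ y := by
    rintro _ ⟨⟨σ, hσ⟩, rfl⟩
    have hσ' : σ ∈ closure {(triv k).perm, m.perm} :=
      zpowers_le.mpr (mul_mem (hclosure (by simp)) (hclosure (by simp))) hσ
    have hy := gammaOrbit_subset m.mapsTo_f_Icc (triv k).mapsTo_f_Icc hM ⟨⟨σ, hσ'⟩, rfl⟩
    exact ⟨(m.moves _).mpr hy, ((triv k).moves _).mpr hy⟩
  constructor
  · rw [charge, hsame (m.f M) ⟨⟨m.perm, hclosure (by simp)⟩, rfl⟩]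
    exact smul_notMem_orbit_zpowers_mul m.perm_mul_self (triv k).perm_mul_self hfree
  · rw [charge, hsame (trivFun k M) ⟨⟨(triv k).perm, hclosure (by simp)⟩, rfl⟩]
    exact smul_notMem_orbit_zpowers_mul' m.perm_mul_self (triv k).perm_mul_self hfree

/-- `𝔪` agrees with `𝔢_k` on `{2j+1, …, 2k}`, i.e. `𝔪` lies in the copy of `𝒫_j` inside `𝒫_k`. -/
def IsTrivAbove (j : ℕ) (m : PairPartition k) : Prop :=
  ∀ x, 2 * j < x → m.f x = trivFun k x

theorem isTrivAbove_triv (j : ℕ) : IsTrivAbove j (triv k) := fun _ _ => rfl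

theorem IsTrivAbove.mapsTo_Icc {j c : ℕ} {m : PairPartition k} (hm : IsTrivAbove j m)
    (hjc : j ≤ c) : MapsTo m.f (Icc 1 (2 * c)) (Icc 1 (2 * c)) := by
  rintro y ⟨hy1, hy2⟩
  have h0 : m.f 0 = 0 := by
    by_contra h
    have := (m.moves 0).mp h
    omega
  have hinv := m.invol y
  constructor
  · by_contra h
    rw [show m.f y = 0 by omega, h0] at hinv
    omega
  · by_cases hyj : 2 * j < y
    · rw [hm y hyj]
      unfold trivFun
      split_ifs <;> omega
    · by_contra h
      rw [hm _ (by omega)] at hinv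
      unfold trivFun at hinv
      split_ifs at hinv <;> omega

theorem swapAct_f {m : PairPartition k} {a b : ℕ} (h : 1 ≤ a ∧ a ≤ 2 * k ∧ 1 ≤ b ∧ b ≤ 2 * k)
    (x : ℕ) : (swapAct a b m).f x = Equiv.swap a b (m.f (Equiv.swap a b x)) := by
  simp only [swapAct, dif_pos h]

theorem swapAct_swapAct (a b : ℕ) (m : PairPartition k) : swapAct a b (swapAct a b m) = m := by
  by_cases h : 1 ≤ a ∧ a ≤ 2 * k ∧ 1 ≤ b ∧ b ≤ 2 * k
  · exact ext' (funext fun x => by simp [swapAct_f h])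
  · simp only [swapAct, dif_neg h]

theorem IsTrivAbove.swapAct {m : PairPartition k} {a i j : ℕ} (hm : IsTrivAbove j m)
    (ha : a ∈ Icc 1 (2 * i - 2)) (hji : j < i) (hik : i ≤ k) :
    IsTrivAbove i (swapAct a (2 * i - 1) m) := by
  intro x hx
  obtain ⟨ha1, ha2⟩ := ha
  rw [swapAct_f (by omega),
    Equiv.swap_apply_of_ne_of_ne (show x ≠ a by omega) (show x ≠ 2 * i - 1 by omega),
    hm x (by omega)]
  exact Equiv.swap_apply_of_ne_of_ne (by unfold trivFun; split_ifs <;> omega)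
    (by unfold trivFun; split_ifs <;> omega)

theorem omegab_swapAct_eq_one {R : Type*} [CommRing R] (b : R) {m : PairPartition k}
    {a i j : ℕ} (hm : IsTrivAbove j m) (ha : a ∈ Icc 1 (2 * i - 2)) (hji : j < i) (hik : i ≤ k) :
    omegab b (swapAct a (2 * i - 1) m) a (2 * i - 1) = 1 := by
  obtain ⟨ha1, ha2⟩ := ha
  have hcond : 1 ≤ a ∧ a ≤ 2 * k ∧ 1 ≤ 2 * i - 1 ∧ 2 * i - 1 ≤ 2 * k := by omega
  set n := swapAct a (2 * i - 1) m
  have hm2i : m.f (2 * i) = 2 * i - 1 := by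
    rw [hm _ (by omega)]
    unfold trivFun
    split_ifs <;> omega
  have hn2i : n.f (2 * i) = a := by
    rw [swapAct_f hcond, Equiv.swap_apply_of_ne_of_ne (show 2 * i ≠ a by omega) (by omega), hm2i,
      Equiv.swap_apply_right]
  have htriv2i : trivFun k (2 * i) = 2 * i - 1 := by
    unfold trivFun
    split_ifs <;> omega
  have hn : MapsTo n.f (Icc 1 (2 * i)) (Icc 1 (2 * i)) := by
    have hswap := Equiv.swap_mapsTo (s := Icc 1 (2 * i)) (a := a) (b := 2 * i - 1)
      ⟨ha1, by omega⟩ ⟨by omega, by omega⟩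
    intro y hy
    rw [swapAct_f hcond]
    exact hswap (hm.mapsTo_Icc hji.le (hswap hy))
  have hsup : sSup (gammaOrbit n (2 * i)) = 2 * i := by
    refine IsGreatest.csSup_eq ⟨mem_orbit_self _, fun y hy => ?_⟩
    exact (gammaOrbit_subset hn ((isTrivAbove_triv 0).mapsTo_Icc (Nat.zero_le i))
      ⟨by omega, le_rfl⟩ hy).2
  obtain ⟨hna, hnb⟩ := not_charge_of_sSup_gammaOrbit (m := n) ⟨by omega, by omega⟩ hsup
  rw [hn2i] at hna
  rw [htriv2i] at hnb
  rw [omegab, if_pos (iff_of_false hna hnb)]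

section Operators

variable {R : Type*} [CommRing R]

theorem isTrivAbove_of_JoddOp_ne_zero {v : PairPartition k → R} {i j : ℕ}
    (hv : ∀ n, v n ≠ 0 → IsTrivAbove j n) (hji : j < i) (hik : i ≤ k) {n : PairPartition k}
    (hn : JoddOp i v n ≠ 0) : IsTrivAbove i n := by
  obtain ⟨a, ha, hva⟩ := Finset.exists_ne_zero_of_sum_ne_zero hn
  rw [← swapAct_swapAct a (2 * i - 1) n]
  exact (hv _ hva).swapAct (Finset.mem_Icc.mp ha) hji hik

theorem JbOp_eq_JoddOp (b : R) {v : PairPartition k → R} {i j : ℕ}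
    (hv : ∀ n, v n ≠ 0 → IsTrivAbove j n) (hji : j < i) (hik : i ≤ k) :
    JbOp b i v = JoddOp i v := by
  funext n
  refine Finset.sum_congr rfl fun a ha => ?_
  by_cases hva : v (swapAct a (2 * i - 1) n) = 0
  · rw [hva, mul_zero]
  · have hω := omegab_swapAct_eq_one b (hv _ hva) (Finset.mem_Icc.mp ha) hji hik
    rw [swapAct_swapAct] at hω
    rw [hω, one_mul]

variable {j : ℕ} {v₀ : PairPartition k → R}

theorem isTrivAbove_of_foldr_JoddOp_ne_zero (hv₀ : ∀ n, v₀ n ≠ 0 → IsTrivAbove j n)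
    {l : List ℕ} (hl : l.Pairwise (· > ·))
    (hrange : ∀ i ∈ l, j < i ∧ i ≤ k) {n : PairPartition k} (hn : l.foldr JoddOp v₀ n ≠ 0) :
    IsTrivAbove (l.headD j) n := by
  induction l generalizing n with
  | nil => exact hv₀ n hn
  | cons i rest ih =>
    obtain ⟨⟨hji, hik⟩, hrest⟩ := List.forall_mem_cons.mp hrange
    exact isTrivAbove_of_JoddOp_ne_zero (fun _ => ih hl.of_cons hrest)
      (List.rel_headD_of_pairwise_cons (r := (· > ·)) hl hji) hik hn

theorem foldr_JbOp_eq_foldr_JoddOp (b : R) (hv₀ : ∀ n, v₀ n ≠ 0 → IsTrivAbove j n)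
    {l : List ℕ} (hl : l.Pairwise (· > ·))
    (hrange : ∀ i ∈ l, j < i ∧ i ≤ k) : l.foldr (JbOp b) v₀ = l.foldr JoddOp v₀ := by
  induction l with
  | nil => rfl
  | cons i rest ih =>
    obtain ⟨⟨hji, hik⟩, hrest⟩ := List.forall_mem_cons.mp hrange
    rw [List.foldr_cons, List.foldr_cons, ih hl.of_cons hrest]
    exact JbOp_eq_JoddOp b (fun n => isTrivAbove_of_foldr_JoddOp_ne_zero hv₀ hl.of_cons hrest)
      (List.rel_headD_of_pairwise_cons (r := (· > ·)) hl hji) hik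

end Operators

end PairPartition

theorem decreasing_bJucysMurphy_eq_oddJucysMurphy_general
    (k : ℕ) (l : List ℕ)
    (hdec : List.Pairwise (· > ·) l) (hrange : ∀ i ∈ l, 1 ≤ i ∧ i ≤ k) :
    l.foldr (fun i v => JbOp (Polynomial.X : Polynomial ℤ) i v) (basisVec k (triv k))
      = l.foldr (fun i v => JoddOp i v) (basisVec k (triv k)) := by
  refine foldr_JbOp_eq_foldr_JoddOp _ (j := 0) (fun n hn => ?_) hdec hrange
  have hn_triv : n = triv k := by
    by_contra h
    simp [basisVec, h] at hn
  exact hn_triv ▸ isTrivAbove_triv 0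

/-- **Decreasing products of `b`-deformed Jucys–Murphy operators applied to the
identity pair partition agree with products of odd Jucys–Murphy elements**
(proof of Proposition 4.24).  Let `k ≥ 1` and let `k ≥ i₁ > i₂ > ⋯ > i_r ≥ 1` be
given (as a strictly decreasing list `l`).  In the free `ℤ[b]`-module with basis
`𝒫_k`, `𝒥_{i₁} ⋯ 𝒥_{i_r} (𝔢_k) = J_{2i₁-1} ⋯ J_{2i_r-1} · 𝔢_k`, where the odd
Jucys–Murphy elements act by the linear extension of the `S_{2k}`-action.  In
particular this vector does not involve `b`. -/
theorem decreasing_bJucysMurphy_eq_oddJucysMurphy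
    (k : ℕ) (hk : 1 ≤ k) (l : List ℕ)
    (hdec : List.Pairwise (· > ·) l) (hrange : ∀ i ∈ l, 1 ≤ i ∧ i ≤ k) :
    l.foldr (fun i v => JbOp (Polynomial.X : Polynomial ℤ) i v) (basisVec k (triv k))
      = l.foldr (fun i v => JoddOp i v) (basisVec k (triv k)) :=
  decreasing_bJucysMurphy_eq_oddJucysMurphy_general k l hdec hrange
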